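/- Let G be a group, p a prime and m ≥ 1. Let ρ_m : G → GSp₄(ℤ/p^mℤ) and ψ : G → (ℤ/p^{m+1}ℤ)ˣ be group homomorphisms, let ϱ : G → GSp₄(ℤ/p^{m+1}ℤ) be a function whose reduction mod p^m equals ρ_m and with ν ∘ ϱ = ψ, and let c : G × G → sp₄(𝔽_p) be the obstruction 2-cocycle defined by ϱ(g)ϱ(h)ϱ(gh)⁻¹ = 1 + p^m·c̃(g,h). Then there exists a group homomorphism ρ_{m+1} : G → GSp₄(ℤ/p^{m+1}ℤ) whose reduction mod p^m is ρ_m and with ν ∘ ρ_{m+1} = ψ, if and only if c is a coboundary, i.e. there exists a function φ : G → sp₄(𝔽_p) such that c(g,h) = ρ̄(g)·φ(h)·ρ̄(g)⁻¹ − φ(gh) + φ(g) for all g, h ∈ G, where ρ̄ is the mod-p reduction of ρ_m. -/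

import Mathlib

open Matrix

/-- The 4×4 matrix `J` given in 2×2 blocks by `[[0, I₂], [−I₂, 0]]`. -/
def Jmat (R : Type*) [CommRing R] : Matrix (Fin 4) (Fin 4) R :=
  !![0, 0, 1, 0; 0, 0, 0, 1; -1, 0, 0, 0; 0, -1, 0, 0]

/-!
The kernel of reduction `M₄(ℤ/p^{m+1}) → M₄(ℤ/p^m)` is `p^m M₄(ℤ/p^{m+1})`, a square-zero ideal
which `X ↦ p^m X̃` identifies with `M₄(𝔽_p)`, the ring `M₄(ℤ/p^{m+1})` acting on it through
reduction mod `p`. Hence the lifts of `ρ_m` are exactly the maps `g ↦ (1 - p^m φ̃(g)) ϱ(g)`.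
Such a map has similitude `ψ` iff every `φ(g)` lies in `sp₄(𝔽_p)`, and, because `(p^m)² = 0`,
it is multiplicative iff `c(g,h) = ρ̄(g) φ(h) ρ̄(g)⁻¹ - φ(gh) + φ(g)`.
-/

theorem Jmat_map {R S : Type*} [CommRing R] [CommRing S] (f : R →+* S) :
    (Jmat R).map f = Jmat S := by
  ext i j
  fin_cases i <;> fin_cases j <;> simp [Jmat]

theorem det_Jmat (R : Type*) [CommRing R] : (Jmat R).det = 1 := by
  simp [Jmat, det_succ_row_zero, Fin.sum_univ_succ, Fin.succAbove]

theorem Matrix.isUnit_of_transpose_mul_mul_eq_smul {n R : Type*} [Fintype n] [DecidableEq n]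
    [CommRing R] {J A : Matrix n n R} {u : Rˣ} (hJ : IsUnit J.det) (h : Aᵀ * J * A = (u : R) • J) :
    IsUnit A := by
  have hdet : A.det * A.det * J.det = (u : R) ^ Fintype.card n * J.det := by
    simpa [det_mul, det_smul, mul_comm, mul_left_comm, mul_assoc] using congrArg det h
  rw [isUnit_iff_isUnit_det]
  exact isUnit_of_mul_isUnit_left ((hJ.mul_left_inj).1 hdet ▸ u.isUnit.pow _)

namespace GSpLift

variable (p m : ℕ)

def toZModP : ZMod (p ^ (m + 1)) →+* ZMod p := ZMod.castHom (dvd_pow_self p m.succ_ne_zero) _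

def toZModPPow : ZMod (p ^ (m + 1)) →+* ZMod (p ^ m) := ZMod.castHom (pow_dvd_pow p m.le_succ) _

variable [NeZero p]

theorem toZModP_natCast_val (a : ZMod p) : toZModP p m a.val = a := by
  rw [map_natCast, ZMod.natCast_zmod_val]

theorem pow_mul_val_toZModP (x : ZMod (p ^ (m + 1))) :
    (p : ZMod (p ^ (m + 1))) ^ m * (toZModP p m x).val = (p : ZMod (p ^ (m + 1))) ^ m * x := by
  have hval : (toZModP p m x).val = x.val % p := by
    rw [toZModP, ZMod.castHom_apply, ZMod.cast_eq_val, ZMod.val_natCast]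
  have hzero : (p : ZMod (p ^ (m + 1))) ^ (m + 1) = 0 := by
    rw [← Nat.cast_pow, ZMod.natCast_self]
  conv_rhs => rw [← ZMod.natCast_zmod_val x, ← Nat.mod_add_div x.val p]
  rw [hval]
  push_cast
  linear_combination (-(x.val / p : ℕ) : ZMod (p ^ (m + 1))) * hzero

/-- `a ↦ p^m ã` for any lift `ã` of `a`: the choice of lift does not matter since `p^{m+1} = 0`. -/
def pPowEmbed : ZMod p →+ ZMod (p ^ (m + 1)) where
  toFun a := (p : ZMod (p ^ (m + 1))) ^ m * a.val
  map_zero' := by simp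
  map_add' a b := by
    have hab : a + b = toZModP p m (a.val + b.val) := by
      rw [map_add, toZModP_natCast_val, toZModP_natCast_val]
    rw [hab, pow_mul_val_toZModP, mul_add]

theorem pPowEmbed_apply (a : ZMod p) : pPowEmbed p m a = (p : ZMod (p ^ (m + 1))) ^ m * a.val :=
  rfl

theorem mul_pPowEmbed (y : ZMod (p ^ (m + 1))) (a : ZMod p) :
    y * pPowEmbed p m a = pPowEmbed p m (toZModP p m y * a) := by
  have hya : toZModP p m y * a = toZModP p m (y * a.val) := by
    rw [map_mul, toZModP_natCast_val]
  rw [hya, pPowEmbed_apply, pPowEmbed_apply, pow_mul_val_toZModP]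
  ring

theorem pPowEmbed_mul (a : ZMod p) (y : ZMod (p ^ (m + 1))) :
    pPowEmbed p m a * y = pPowEmbed p m (a * toZModP p m y) := by
  rw [mul_comm, mul_pPowEmbed, mul_comm]

theorem pPowEmbed_mul_pPowEmbed (hm : 1 ≤ m) (a b : ZMod p) :
    pPowEmbed p m a * pPowEmbed p m b = 0 := by
  have hzero : (p : ZMod (p ^ (m + 1))) ^ (m + m) = 0 := by
    rw [← Nat.cast_pow, ZMod.natCast_eq_zero_iff]
    exact pow_dvd_pow p (by omega)
  rw [pPowEmbed_apply, pPowEmbed_apply]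
  linear_combination ((a.val : ZMod (p ^ (m + 1))) * b.val) * hzero

theorem pPowEmbed_injective : Function.Injective (pPowEmbed p m) := by
  refine (injective_iff_map_eq_zero _).2 fun a ha => ?_
  rw [pPowEmbed_apply, ← Nat.cast_pow, ← Nat.cast_mul, ZMod.natCast_eq_zero_iff, pow_succ,
    Nat.mul_dvd_mul_iff_left (pow_pos (Nat.pos_of_neZero p) m)] at ha
  exact (ZMod.val_eq_zero a).1 (Nat.eq_zero_of_dvd_of_lt ha a.val_lt)

theorem toZModP_pPowEmbed (hm : 1 ≤ m) (a : ZMod p) : toZModP p m (pPowEmbed p m a) = 0 := by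
  rw [pPowEmbed_apply, map_mul, map_pow, map_natCast, ZMod.natCast_self,
    zero_pow (by omega), zero_mul]

theorem toZModPPow_pPowEmbed (a : ZMod p) : toZModPPow p m (pPowEmbed p m a) = 0 := by
  rw [pPowEmbed_apply, map_mul, map_pow, map_natCast, ← Nat.cast_pow, ZMod.natCast_self, zero_mul]

theorem exists_pPowEmbed_eq_of_toZModPPow_eq_zero {x : ZMod (p ^ (m + 1))}
    (hx : toZModPPow p m x = 0) : ∃ a, pPowEmbed p m a = x := by
  rw [toZModPPow, ZMod.castHom_apply, ZMod.cast_eq_val, ZMod.natCast_eq_zero_iff] at hx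
  obtain ⟨k, hk⟩ := hx
  refine ⟨toZModP p m k, ?_⟩
  rw [pPowEmbed_apply, pow_mul_val_toZModP, ← ZMod.natCast_zmod_val x, hk, Nat.cast_mul,
    Nat.cast_pow]

section Matrix

variable {n : Type*}

theorem mapMatrix_pPowEmbed_injective :
    Function.Injective ((pPowEmbed p m).mapMatrix : Matrix n n (ZMod p) → _) :=
  map_injective (pPowEmbed_injective p m)

theorem mapMatrix_pPowEmbed_eq_smul (X : Matrix n n (ZMod p)) :
    (pPowEmbed p m).mapMatrix X
      = (p : ZMod (p ^ (m + 1))) ^ m • X.map (fun x => (x.val : ZMod (p ^ (m + 1)))) :=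
  rfl

theorem map_toZModP_mapMatrix_pPowEmbed (hm : 1 ≤ m) (X : Matrix n n (ZMod p)) :
    ((pPowEmbed p m).mapMatrix X).map (toZModP p m) = 0 := by
  ext i j
  simp [toZModP_pPowEmbed p m hm]

theorem map_toZModPPow_mapMatrix_pPowEmbed (X : Matrix n n (ZMod p)) :
    ((pPowEmbed p m).mapMatrix X).map (toZModPPow p m) = 0 := by
  ext i j
  simp [toZModPPow_pPowEmbed]

theorem exists_mapMatrix_pPowEmbed_eq_of_map_eq_zero {M : Matrix n n (ZMod (p ^ (m + 1)))}
    (hM : M.map (toZModPPow p m) = 0) : ∃ X, (pPowEmbed p m).mapMatrix X = M := by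
  choose X hX using fun i j =>
    exists_pPowEmbed_eq_of_toZModPPow_eq_zero p m (congrFun (congrFun hM i) j)
  exact ⟨of X, by ext i j; exact hX i j⟩

variable [Fintype n]

theorem mul_mapMatrix_pPowEmbed (M : Matrix n n (ZMod (p ^ (m + 1)))) (X : Matrix n n (ZMod p)) :
    M * (pPowEmbed p m).mapMatrix X = (pPowEmbed p m).mapMatrix (M.map (toZModP p m) * X) := by
  ext i j
  simp only [AddMonoidHom.mapMatrix_apply, mul_apply, map_apply, map_sum, mul_pPowEmbed]

theorem mapMatrix_pPowEmbed_mul (X : Matrix n n (ZMod p)) (M : Matrix n n (ZMod (p ^ (m + 1)))) :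
    (pPowEmbed p m).mapMatrix X * M = (pPowEmbed p m).mapMatrix (X * M.map (toZModP p m)) := by
  ext i j
  simp only [AddMonoidHom.mapMatrix_apply, mul_apply, map_apply, map_sum, pPowEmbed_mul]

theorem mapMatrix_pPowEmbed_mul_mapMatrix_pPowEmbed (hm : 1 ≤ m) (X Y : Matrix n n (ZMod p)) :
    (pPowEmbed p m).mapMatrix X * (pPowEmbed p m).mapMatrix Y = 0 := by
  ext i j
  simp [mul_apply, pPowEmbed_mul_pPowEmbed p m hm]

variable [DecidableEq n]

theorem one_sub_mul_mul_one_sub_mul (hm : 1 ≤ m) (X Y : Matrix n n (ZMod p))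
    (A B : Matrix n n (ZMod (p ^ (m + 1)))) :
    (1 - (pPowEmbed p m).mapMatrix X) * A * ((1 - (pPowEmbed p m).mapMatrix Y) * B)
      = A * B - (pPowEmbed p m).mapMatrix
          (X * (A * B).map (toZModP p m) + A.map (toZModP p m) * Y * B.map (toZModP p m)) := by
  have hXY : (pPowEmbed p m).mapMatrix X * A * ((pPowEmbed p m).mapMatrix Y * B) = 0 := by
    rw [mapMatrix_pPowEmbed_mul, ← mul_assoc, mapMatrix_pPowEmbed_mul_mapMatrix_pPowEmbed p m hm,
      zero_mul]
  calc (1 - (pPowEmbed p m).mapMatrix X) * A * ((1 - (pPowEmbed p m).mapMatrix Y) * B)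
      = A * B - (pPowEmbed p m).mapMatrix X * (A * B) - A * (pPowEmbed p m).mapMatrix Y * B
          + (pPowEmbed p m).mapMatrix X * A * ((pPowEmbed p m).mapMatrix Y * B) := by
        noncomm_ring
    _ = _ := by
      rw [hXY, mul_mapMatrix_pPowEmbed, mapMatrix_pPowEmbed_mul, mapMatrix_pPowEmbed_mul, map_add]
      abel

theorem transpose_one_sub_mul_mul_one_sub (hm : 1 ≤ m) (X : Matrix n n (ZMod p))
    (J : Matrix n n (ZMod (p ^ (m + 1)))) :
    (1 - (pPowEmbed p m).mapMatrix X)ᵀ * J * (1 - (pPowEmbed p m).mapMatrix X)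
      = J - (pPowEmbed p m).mapMatrix (Xᵀ * J.map (toZModP p m) + J.map (toZModP p m) * X) := by
  have hT : ((pPowEmbed p m).mapMatrix X)ᵀ = (pPowEmbed p m).mapMatrix Xᵀ := transpose_map
  calc (1 - (pPowEmbed p m).mapMatrix X)ᵀ * J * (1 - (pPowEmbed p m).mapMatrix X)
      = J - (pPowEmbed p m).mapMatrix Xᵀ * J - J * (pPowEmbed p m).mapMatrix X
          + (pPowEmbed p m).mapMatrix Xᵀ * J * (pPowEmbed p m).mapMatrix X := by
        rw [transpose_sub, transpose_one, hT]
        noncomm_ring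
    _ = _ := by
      rw [mapMatrix_pPowEmbed_mul, mapMatrix_pPowEmbed_mul_mapMatrix_pPowEmbed p m hm,
        mul_mapMatrix_pPowEmbed, map_add]
      abel

theorem one_sub_mul_similitude_iff (hm : 1 ≤ m) {A J : Matrix n n (ZMod (p ^ (m + 1)))}
    {u : ZMod (p ^ (m + 1))} (hA : IsUnit A) (hAJ : Aᵀ * J * A = u • J) (X : Matrix n n (ZMod p)) :
    ((1 - (pPowEmbed p m).mapMatrix X) * A)ᵀ * J * ((1 - (pPowEmbed p m).mapMatrix X) * A) = u • J
      ↔ Xᵀ * J.map (toZModP p m) + J.map (toZModP p m) * X = 0 := by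
  set S := Xᵀ * J.map (toZModP p m) + J.map (toZModP p m) * X
  have h : ((1 - (pPowEmbed p m).mapMatrix X) * A)ᵀ * J * ((1 - (pPowEmbed p m).mapMatrix X) * A)
      = u • J - Aᵀ * (pPowEmbed p m).mapMatrix S * A := by
    calc _ = Aᵀ * ((1 - (pPowEmbed p m).mapMatrix X)ᵀ * J * (1 - (pPowEmbed p m).mapMatrix X))
            * A := by
          simp only [transpose_mul, mul_assoc]
      _ = _ := by
          rw [transpose_one_sub_mul_mul_one_sub p m hm, mul_sub, sub_mul, hAJ]
  rw [h, sub_eq_self, hA.mul_left_eq_zero, ((isUnit_transpose A).2 hA).mul_right_eq_zero,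
    map_eq_zero_iff _ (mapMatrix_pPowEmbed_injective p m)]

theorem map_toZModPPow_one_sub_mul (X : Matrix n n (ZMod p))
    (A : Matrix n n (ZMod (p ^ (m + 1)))) :
    ((1 - (pPowEmbed p m).mapMatrix X) * A).map (toZModPPow p m) = A.map (toZModPPow p m) := by
  rw [Matrix.map_mul, Matrix.map_sub _ (map_sub _), map_toZModPPow_mapMatrix_pPowEmbed,
    Matrix.map_one _ (map_zero _) (map_one _), sub_zero, one_mul]

theorem exists_eq_one_sub_mul {A B : Matrix n n (ZMod (p ^ (m + 1)))} (hA : IsUnit A)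
    (h : B.map (toZModPPow p m) = A.map (toZModPPow p m)) :
    ∃ X, B = (1 - (pPowEmbed p m).mapMatrix X) * A := by
  obtain ⟨Y, hY⟩ := exists_mapMatrix_pPowEmbed_eq_of_map_eq_zero p m
    (M := A - B) (by rw [Matrix.map_sub _ (map_sub _), h, sub_self])
  obtain ⟨a, ha⟩ := hA.map (toZModP p m).mapMatrix
  refine ⟨Y * a⁻¹.val, ?_⟩
  rw [sub_mul, one_mul, mapMatrix_pPowEmbed_mul, ← RingHom.mapMatrix_apply, ← ha, mul_assoc,
    Units.inv_mul, mul_one, hY, sub_sub_cancel]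

theorem one_sub_mul_eq_mul_iff (hm : 1 ≤ m) {A B C : Matrix n n (ZMod (p ^ (m + 1)))}
    {c : Matrix n n (ZMod p)} (hA : IsUnit A) (hB : IsUnit B)
    (hABC : A * B = (1 + (pPowEmbed p m).mapMatrix c) * C) (X Y Z : Matrix n n (ZMod p)) :
    (1 - (pPowEmbed p m).mapMatrix Z) * C
        = (1 - (pPowEmbed p m).mapMatrix X) * A * ((1 - (pPowEmbed p m).mapMatrix Y) * B)
      ↔ c = A.map (toZModP p m) * Y * (A.map (toZModP p m))⁻¹ - Z + X := by
  obtain ⟨a, ha : a.val = A.map (toZModP p m)⟩ := hA.map (toZModP p m).mapMatrix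
  obtain ⟨b, hb : b.val = B.map (toZModP p m)⟩ := hB.map (toZModP p m).mapMatrix
  have hAB : A * B = C + (pPowEmbed p m).mapMatrix (c * C.map (toZModP p m)) := by
    rw [hABC, add_mul, one_mul, mapMatrix_pPowEmbed_mul]
  have hC : (A * B).map (toZModP p m) = C.map (toZModP p m) := by
    rw [hAB, Matrix.map_add _ (map_add _), map_toZModP_mapMatrix_pPowEmbed p m hm, add_zero]
  have hab : C.map (toZModP p m) = (a * b).val := by
    rw [← hC, Units.val_mul, ha, hb, Matrix.map_mul]
  have hconj : a.val * Y * b.val = a.val * Y * a⁻¹.val * (a * b).val := by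
    rw [Units.val_mul, mul_assoc _ a⁻¹.val, Units.inv_mul_cancel_left]
  have hdiff : (1 - (pPowEmbed p m).mapMatrix Z) * C
        - (1 - (pPowEmbed p m).mapMatrix X) * A * ((1 - (pPowEmbed p m).mapMatrix Y) * B)
      = (pPowEmbed p m).mapMatrix ((X - c - Z + a.val * Y * a⁻¹.val) * (a * b).val) := by
    rw [one_sub_mul_mul_one_sub_mul p m hm, hC, hAB, sub_mul, one_mul, mapMatrix_pPowEmbed_mul,
      hab, ← ha, ← hb, hconj]
    simp only [add_mul, sub_mul, map_add, map_sub]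
    abel
  rw [← sub_eq_zero, hdiff, map_eq_zero_iff _ (mapMatrix_pPowEmbed_injective p m),
    Units.mul_left_eq_zero, ← ha, ← coe_units_inv,
    show X - c - Z + a.val * Y * a⁻¹.val = -(c - (a.val * Y * a⁻¹.val - Z + X)) by abel,
    neg_eq_zero, sub_eq_zero]

end Matrix

end GSpLift

open GSpLift

/-- A homomorphism `ρ_m : G → GSp₄(ℤ/p^mℤ)` admits a homomorphic lift
`ρ_{m+1} : G → GSp₄(ℤ/p^{m+1}ℤ)` with similitude character `ψ` if and only if the
obstruction 2-cocycle `c` (defined via a set-theoretic lift `ϱ` with `ν ∘ ϱ = ψ` by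
`ϱ(g)ϱ(h)ϱ(gh)⁻¹ = 1 + p^m·c̃(g,h)`) is a coboundary. -/
theorem lift_exists_iff_coboundary (p : ℕ) [Fact p.Prime] (m : ℕ) (hm : 1 ≤ m)
    (G : Type*) [Group G]
    (ρm : G → Matrix (Fin 4) (Fin 4) (ZMod (p ^ m)))
    (ψ : G →* (ZMod (p ^ (m + 1)))ˣ)
    (ϱ : G → Matrix (Fin 4) (Fin 4) (ZMod (p ^ (m + 1))))
    (hred : ∀ g : G,
      (ϱ g).map (ZMod.castHom (pow_dvd_pow p (by omega : m ≤ m + 1)) (ZMod (p ^ m))) = ρm g)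
    (hν : ∀ g : G,
      (ϱ g)ᵀ * Jmat (ZMod (p ^ (m + 1))) * ϱ g
        = ((ψ g : (ZMod (p ^ (m + 1)))ˣ) : ZMod (p ^ (m + 1))) • Jmat (ZMod (p ^ (m + 1))))
    (c : G → G → Matrix (Fin 4) (Fin 4) (ZMod p))
    (hc : ∀ g h : G,
      (c g h)ᵀ * Jmat (ZMod p) + Jmat (ZMod p) * c g h = 0 ∧
      ϱ g * ϱ h * (ϱ (g * h))⁻¹
        = 1 + ((p : ZMod (p ^ (m + 1))) ^ m) •
            (c g h).map (fun x => (x.val : ZMod (p ^ (m + 1))))) :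
    (∃ ρ' : G → Matrix (Fin 4) (Fin 4) (ZMod (p ^ (m + 1))),
      (∀ g h : G, ρ' (g * h) = ρ' g * ρ' h) ∧
      (∀ g : G,
        (ρ' g).map (ZMod.castHom (pow_dvd_pow p (by omega : m ≤ m + 1)) (ZMod (p ^ m)))
          = ρm g) ∧
      (∀ g : G,
        (ρ' g)ᵀ * Jmat (ZMod (p ^ (m + 1))) * ρ' g
          = ((ψ g : (ZMod (p ^ (m + 1)))ˣ) : ZMod (p ^ (m + 1))) • Jmat (ZMod (p ^ (m + 1)))))
    ↔
    (∃ φ : G → Matrix (Fin 4) (Fin 4) (ZMod p),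
      (∀ g : G, (φ g)ᵀ * Jmat (ZMod p) + Jmat (ZMod p) * φ g = 0) ∧
      (∀ g h : G,
        c g h
          = (ρm g).map (ZMod.castHom (dvd_pow_self p (by omega : m ≠ 0)) (ZMod p)) * φ h *
              ((ρm g).map (ZMod.castHom (dvd_pow_self p (by omega : m ≠ 0)) (ZMod p)))⁻¹
            - φ (g * h) + φ g)) := by
  have hunit (g : G) : IsUnit (ϱ g) :=
    isUnit_of_transpose_mul_mul_eq_smul (by simp [det_Jmat]) (hν g)
  have hϱmul (g h : G) : ϱ g * ϱ h = (1 + (pPowEmbed p m).mapMatrix (c g h)) * ϱ (g * h) := by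
    rw [mapMatrix_pPowEmbed_eq_smul, ← (hc g h).2,
      nonsing_inv_mul_cancel_right _ _ ((isUnit_iff_isUnit_det _).1 (hunit (g * h)))]
  have hbar (g : G) : (ρm g).map (ZMod.castHom (dvd_pow_self p (by omega : m ≠ 0)) (ZMod p))
      = (ϱ g).map (toZModP p m) := by
    rw [← hred g, Matrix.map_map, ← RingHom.coe_comp, ZMod.castHom_comp]
    rfl
  have hJ : (Jmat (ZMod (p ^ (m + 1)))).map (toZModP p m) = Jmat (ZMod p) := Jmat_map _
  simp only [hbar]
  constructor
  · rintro ⟨ρ', hρ'mul, hρ'red, hρ'ν⟩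
    choose φ hφ using fun g =>
      exists_eq_one_sub_mul p m (hunit g) ((hρ'red g).trans (hred g).symm)
    refine ⟨φ, fun g => ?_, fun g h => ?_⟩
    · rw [← hJ, ← one_sub_mul_similitude_iff p m hm (hunit g) (hν g), ← hφ]
      exact hρ'ν g
    · rw [← one_sub_mul_eq_mul_iff p m hm (hunit g) (hunit h) (hϱmul g h), ← hφ, ← hφ, ← hφ]
      exact hρ'mul g h
  · rintro ⟨φ, hsp, hcob⟩
    refine ⟨fun g => (1 - (pPowEmbed p m).mapMatrix (φ g)) * ϱ g, fun g h => ?_, fun g => ?_,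
      fun g => ?_⟩
    · exact (one_sub_mul_eq_mul_iff p m hm (hunit g) (hunit h) (hϱmul g h) _ _ _).2 (hcob g h)
    · exact (map_toZModPPow_one_sub_mul p m _ _).trans (hred g)
    · exact (one_sub_mul_similitude_iff p m hm (hunit g) (hν g) _).2 (by rw [hJ]; exact hsp g)
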